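/- (Khavinson's theorem) Let (f_n) be a sequence of analytic functions on the open unit disk Δ with |f_n(z)| ≤ M for all z ∈ Δ and all n. If f_n converges pointwise on Δ to a (necessarily bounded analytic) function g, then the radial boundary functions f_n* converge weak-star in L^∞(T) to the boundary function g* of g, i.e., ∫_T f_n*(z)Q(z)dz → ∫_T g*(z)Q(z)dz for every Q ∈ L^1(T). -/

import Mathlib

/-!
Parametrize the unit circle by `𝕋 = ℝ / 2πℤ`. The boundary functions are bounded by `M` in
`L^∞(𝕋)` and trigonometric polynomials are dense in `L^1(𝕋)`, so it suffices that every Fourier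
coefficient `∫ h* e_k` of `f_n*` converges to that of `g*`.

For `h` holomorphic on the disc, Cauchy's theorem on an annulus (applied to `z^(k-1) h z`) shows
that `r^k ∫ h(r e^{iθ}) e^{ikθ} dθ` does not depend on `r ∈ (0, 1)`; letting `r → 1` by dominated
convergence, the coefficient of `h*` is the value of this quantity at `r = 1/2`. The limit `g` is
not known to be holomorphic, but it inherits the same `r`-independence from the `f_n` by dominated
convergence in `n`, and dominated convergence on the circle of radius `1/2` finally gives the
convergence of the coefficients.
-/

open Complex MeasureTheory Filter Topology Metric

def IsRadialBoundary (g gstar : ℂ → ℂ) : Prop :=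
  ∀ᵐ θ : ℝ, Tendsto (fun r : ℝ => g ((r : ℂ) * circleMap 0 1 θ))
    (𝓝[<] (1 : ℝ)) (𝓝 (gstar (circleMap 0 1 θ)))

def WeakStarTo (f : ℕ → ℂ → ℂ) (h : ℂ → ℂ) : Prop :=
  ∀ Q : ℂ → ℂ,
    IntervalIntegrable (fun θ : ℝ => Q (circleMap 0 1 θ)) volume 0 (2 * Real.pi) →
    Tendsto (fun n => ∮ z in C(0, 1), f n z * Q z) atTop
      (𝓝 (∮ z in C(0, 1), h z * Q z))

open Set Submodule
open scoped ENNReal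

theorem tendsto_apply_of_tendsto_on_dense_span {𝕜 E F ι κ : Type*} [NontriviallyNormedField 𝕜]
    [NormedAddCommGroup E] [NormedSpace 𝕜 E] [NormedAddCommGroup F] [NormedSpace 𝕜 F]
    {l : Filter κ} {L : κ → E →L[𝕜] F} {L' : E →L[𝕜] F} {C : ℝ} (hL : ∀ n, ‖L n‖ ≤ C)
    {φ : ι → E} (hφ : (span 𝕜 (range φ)).topologicalClosure = ⊤)
    (h : ∀ i, Tendsto (fun n => L n (φ i)) l (𝓝 (L' (φ i)))) (x : E) :
    Tendsto (fun n => L n x) l (𝓝 (L' x)) := by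
  have hequi : Equicontinuous ((↑) ∘ L : κ → E → F) :=
    ((NormedSpace.equicontinuous_TFAE L).out 1 5).mpr (show ∃ C, ∀ n, ‖L n‖ ≤ C from ⟨C, hL⟩)
  have hclosed := hequi.isClosed_setOfPred_tendsto (l := l) L'.continuous
  have hspan : (span 𝕜 (range φ) : Set E) ⊆ {x | Tendsto (fun n => L n x) l (𝓝 (L' x))} := by
    intro y hy
    induction hy using Submodule.span_induction with
    | mem y hy => obtain ⟨i, rfl⟩ := hy; exact h i
    | zero => simpa using tendsto_const_nhds
    | add y z _ _ hy hz => simpa using hy.add hz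
    | smul a y _ hy => simpa using hy.const_smul a
  have hx : x ∈ closure (span 𝕜 (range φ) : Set E) := by
    rw [← Submodule.topologicalClosure_coe, hφ]; trivial
  exact hclosed.closure_subset_iff.mpr hspan hx

theorem tendsto_integral_mul_of_tendsto_on_dense_span {α ι : Type*} [MeasurableSpace α]
    {μ : Measure α} {u : ℕ → α → ℂ} {v : α → ℂ} {C : ℝ} (hu : ∀ n, MemLp (u n) ∞ μ)
    (hu_bd : ∀ n, ∀ᵐ x ∂μ, ‖u n x‖ ≤ C) (hv : MemLp v ∞ μ)
    {φ : ι → Lp ℂ 1 μ} (hφ : (span ℂ (range φ)).topologicalClosure = ⊤)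
    (h : ∀ i, Tendsto (fun n => ∫ x, u n x * φ i x ∂μ) atTop (𝓝 (∫ x, v x * φ i x ∂μ)))
    {R : α → ℂ} (hR : Integrable R μ) :
    Tendsto (fun n => ∫ x, u n x * R x ∂μ) atTop (𝓝 (∫ x, v x * R x ∂μ)) := by
  set P := (ContinuousLinearMap.mul ℂ ℂ).lpPairing μ ∞ 1
  have hP : ∀ {w : α → ℂ} (hw : MemLp w ∞ μ) (S : Lp ℂ 1 μ),
      P (hw.toLp w) S = ∫ x, w x * S x ∂μ := fun hw S => by
    rw [ContinuousLinearMap.lpPairing_eq_integral]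
    exact integral_congr_ae (hw.coeFn_toLp.mono fun x hx => by simp [hx])
  have hbd : ∀ n, ‖P ((hu n).toLp (u n))‖ ≤ ‖P‖ * (ENNReal.ofReal C).toReal := fun n =>
    (P.le_opNorm _).trans <| by
      gcongr
      rw [Lp.norm_toLp, eLpNorm_exponent_top]
      exact ENNReal.toReal_mono ENNReal.ofReal_ne_top (eLpNormEssSup_le_of_ae_bound (hu_bd n))
  have := tendsto_apply_of_tendsto_on_dense_span (L' := P (hv.toLp v)) hbd hφ
    (fun i => by simpa only [hP] using h i) (hR.toL1 R)
  have hR' : ∀ w : α → ℂ, ∫ x, w x * hR.toL1 R x ∂μ = ∫ x, w x * R x ∂μ := fun w =>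
    integral_congr_ae (hR.coeFn_toL1.mono fun x hx => congrArg (w x * ·) hx)
  simpa only [hP, hR'] using this

namespace AddCircle

variable {T : ℝ}

theorem fourier_eq_toCircle_zpow (k : ℤ) (x : AddCircle T) :
    fourier k x = (toCircle x : ℂ) ^ k := by
  rw [fourier_apply, toCircle_zsmul, Circle.coe_zpow]

variable [Fact (0 < T)]

theorem measurePreserving_coe_equivIoc (a : ℝ) :
    MeasurePreserving (fun x : AddCircle T => (equivIoc T a x : ℝ)) volume
      (volume.restrict (Ioc a (a + T))) :=
  (measurePreserving_subtype_coe measurableSet_Ioc).comp (measurePreserving_equivIoc T)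

theorem ae_haarAddCircle_of_ae_coe {p : AddCircle T → Prop} (h : ∀ᵐ θ : ℝ, p θ) :
    ∀ᵐ x ∂haarAddCircle, p x := by
  have hvol : ∀ᵐ x : AddCircle T, p x := by
    have := (measurePreserving_coe_equivIoc (T := T) 0).quasiMeasurePreserving.ae
      (ae_restrict_of_ae h)
    simp only [coe_equivIoc] at this
    exact this
  rwa [volume_eq_smul_haarAddCircle,
    Measure.ae_ennreal_smul_measure_iff (ENNReal.ofReal_pos.mpr Fact.out).ne'] at hvol

theorem integrable_haarAddCircle_of_intervalIntegrable {F : AddCircle T → ℂ}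
    (hF : IntervalIntegrable (fun θ : ℝ => F θ) volume 0 T) :
    Integrable F haarAddCircle := by
  rw [intervalIntegrable_iff_integrableOn_Ioc_of_le (le_of_lt Fact.out), IntegrableOn,
    ← memLp_one_iff_integrable] at hF
  replace hF : MemLp (fun θ : ℝ => F θ) 1 (volume.restrict (Ioc 0 (0 + T))) := by
    rwa [zero_add]
  have := hF.comp_measurePreserving (measurePreserving_coe_equivIoc 0)
  simp only [Function.comp_def, coe_equivIoc] at this
  exact memLp_one_iff_integrable.mp this.haarAddCircle

theorem tendsto_integral_mul_of_tendsto_fourier {u : ℕ → AddCircle T → ℂ}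
    {v : AddCircle T → ℂ} {C : ℝ} (hu : ∀ n, MemLp (u n) ∞ haarAddCircle)
    (hu_bd : ∀ n, ∀ᵐ x ∂haarAddCircle, ‖u n x‖ ≤ C) (hv : MemLp v ∞ haarAddCircle)
    (h : ∀ k : ℤ, Tendsto (fun n => ∫ x, u n x * fourier k x ∂haarAddCircle) atTop
      (𝓝 (∫ x, v x * fourier k x ∂haarAddCircle)))
    {R : AddCircle T → ℂ} (hR : Integrable R haarAddCircle) :
    Tendsto (fun n => ∫ x, u n x * R x ∂haarAddCircle) atTop
      (𝓝 (∫ x, v x * R x ∂haarAddCircle)) := by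
  refine tendsto_integral_mul_of_tendsto_on_dense_span hu hu_bd hv
    (span_fourierLp_closure_eq_top ENNReal.one_ne_top) (fun k => ?_) hR
  have hk : ∀ w : AddCircle T → ℂ, ∫ x, w x * fourierLp 1 k x ∂haarAddCircle =
      ∫ x, w x * fourier k x ∂haarAddCircle := fun w =>
    integral_congr_ae ((coeFn_fourierLp 1 k).mono fun x hx => congrArg (w x * ·) hx)
  simpa only [hk] using h k

end AddCircle

open Real AddCircle

instance fact_two_pi_pos : Fact (0 < 2 * π) := ⟨two_pi_pos⟩

local notation "𝕋" => AddCircle (2 * π)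

theorem coe_toCircle_eq_circleMap (θ : ℝ) :
    (toCircle (θ : 𝕋) : ℂ) = circleMap 0 1 θ := by
  rw [toCircle_apply_mk, Circle.coe_exp, circleMap_zero, div_self two_pi_pos.ne']
  simp

theorem circleIntegral_eq_two_pi_smul_integral_haarAddCircle {E : Type*}
    [NormedAddCommGroup E] [NormedSpace ℂ E] (F : ℂ → E) (c : ℂ) (R : ℝ) :
    (∮ z in C(c, R), F z) =
      (2 * π) • ∫ x : 𝕋, (R * toCircle x * I : ℂ) • F (c + R * toCircle x) ∂haarAddCircle := by
  have := AddCircle.intervalIntegral_preimage (2 * π) 0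
    fun x : 𝕋 => (R * toCircle x * I : ℂ) • F (c + R * toCircle x)
  rw [zero_add] at this
  rw [circleIntegral, integral_haarAddCircle, smul_inv_smul₀ two_pi_pos.ne', ← this]
  congr 1 with θ
  rw [deriv_circleMap, coe_toCircle_eq_circleMap]
  simp [circleMap]

/-- Pairs with `fourier k`, not `fourier (-k)` as `fourierCoeff` does. -/
noncomputable def radialCoeff (h : ℂ → ℂ) (k : ℤ) (r : ℝ) : ℂ :=
  ∫ x : 𝕋, h (r * toCircle x) * fourier k x ∂haarAddCircle

theorem circleIntegral_zpow_sub_one_mul_eq (h : ℂ → ℂ) (k : ℤ) {r : ℝ} (hr : r ≠ 0) :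
    (∮ z in C(0, r), z ^ (k - 1) * h z) = 2 * π * I * r ^ k * radialCoeff h k r := by
  rw [circleIntegral_eq_two_pi_smul_integral_haarAddCircle, radialCoeff, real_smul,
    ← integral_const_mul, ← integral_const_mul]
  refine integral_congr_ae (.of_forall fun x => ?_)
  have hr' : (r : ℂ) ≠ 0 := by exact_mod_cast hr
  have hx : (r * toCircle x : ℂ) ≠ 0 := mul_ne_zero hr' (Circle.coe_ne_zero _)
  simp only [zero_add, fourier_eq_toCircle_zpow, zpow_sub_one₀ hx, mul_zpow, smul_eq_mul]
  push_cast
  field_simp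

theorem zpow_mul_radialCoeff_eq {h : ℂ → ℂ} {ρ : ℝ} (hh : DifferentiableOn ℂ h (ball 0 ρ))
    (k : ℤ) {r s : ℝ} (hr : r ∈ Ioo 0 ρ) (hs : s ∈ Ioo 0 ρ) :
    (r : ℂ) ^ k * radialCoeff h k r = (s : ℂ) ^ k * radialCoeff h k s := by
  wlog hrs : r ≤ s generalizing r s
  · exact (this hs hr (le_of_not_ge hrs)).symm
  have hd : DifferentiableOn ℂ (fun z => z ^ (k - 1) * h z) (ball 0 ρ \ {0}) :=
    (differentiableOn_id.zpow (Or.inl fun z hz => hz.2)).mul (hh.mono sdiff_subset)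
  have hsub : closedBall (0 : ℂ) s \ ball 0 r ⊆ ball 0 ρ \ {0} := by
    intro z ⟨hzs, hzr⟩
    rw [mem_closedBall_zero_iff] at hzs
    rw [mem_ball_zero_iff, not_lt] at hzr
    refine ⟨mem_ball_zero_iff.mpr (hzs.trans_lt hs.2), fun hz0 => ?_⟩
    rw [mem_singleton_iff.mp hz0, norm_zero] at hzr
    exact hr.1.not_ge hzr
  have hann : (∮ z in C(0, s), z ^ (k - 1) * h z) = ∮ z in C(0, r), z ^ (k - 1) * h z :=
    circleIntegral_eq_of_differentiable_on_annulus_off_countable hr.1 hrs countable_empty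
      (hd.continuousOn.mono hsub) fun z hz => hd.differentiableAt <|
        (isOpen_ball.sdiff isClosed_singleton).mem_nhds <| hsub
          ⟨ball_subset_closedBall hz.1.1, fun h => hz.1.2 (ball_subset_closedBall h)⟩
  rw [circleIntegral_zpow_sub_one_mul_eq h k hr.1.ne',
    circleIntegral_zpow_sub_one_mul_eq h k hs.1.ne'] at hann
  have h2πI : (2 * π * I : ℂ) ≠ 0 := by simp [pi_ne_zero, I_ne_zero]
  exact (mul_left_cancel₀ h2πI (by simpa only [mul_assoc] using hann)).symm

theorem ofReal_mul_toCircle_mem_ball {r : ℝ} (hr : r ∈ Ioo 0 1) (x : 𝕋) :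
    (r : ℂ) * toCircle x ∈ ball (0 : ℂ) 1 := by
  simpa [Circle.norm_coe, abs_of_pos hr.1] using hr.2

theorem ContinuousOn.aestronglyMeasurable_comp_ofReal_mul_toCircle {h : ℂ → ℂ}
    (hh : ContinuousOn h (ball 0 1)) {r : ℝ} (hr : r ∈ Ioo 0 1) (μ : Measure 𝕋) :
    AEStronglyMeasurable (fun x : 𝕋 => h (r * toCircle x)) μ :=
  (hh.comp_continuous (by fun_prop) (ofReal_mul_toCircle_mem_ball hr)).aestronglyMeasurable

theorem tendsto_radialCoeff_of_tendsto {M : ℝ} {f : ℕ → ℂ → ℂ} {g : ℂ → ℂ}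
    (hf : ∀ n, ContinuousOn (f n) (ball 0 1)) (hbd : ∀ n, ∀ z ∈ ball (0 : ℂ) 1, ‖f n z‖ ≤ M)
    (hconv : ∀ z ∈ ball (0 : ℂ) 1, Tendsto (fun n => f n z) atTop (𝓝 (g z)))
    (k : ℤ) {r : ℝ} (hr : r ∈ Ioo 0 1) :
    Tendsto (fun n => radialCoeff (f n) k r) atTop (𝓝 (radialCoeff g k r)) :=
  tendsto_integral_of_dominated_convergence (fun _ => M)
    (fun n => ((hf n).aestronglyMeasurable_comp_ofReal_mul_toCircle hr _).mul
      (fourier k).continuous.aestronglyMeasurable) (integrable_const M)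
    (fun n => .of_forall fun x => by
      simpa [Circle.norm_coe] using hbd n _ (ofReal_mul_toCircle_mem_ball hr x))
    (.of_forall fun x => (hconv _ (ofReal_mul_toCircle_mem_ball hr x)).mul_const _)

theorem aestronglyMeasurable_comp_ofReal_mul_toCircle_of_tendsto {f : ℕ → ℂ → ℂ} {g : ℂ → ℂ}
    (hf : ∀ n, ContinuousOn (f n) (ball 0 1))
    (hconv : ∀ z ∈ ball (0 : ℂ) 1, Tendsto (fun n => f n z) atTop (𝓝 (g z)))
    {r : ℝ} (hr : r ∈ Ioo 0 1) :
    AEStronglyMeasurable (fun x : 𝕋 => g (r * toCircle x)) haarAddCircle :=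
  aestronglyMeasurable_of_tendsto_ae atTop
    (fun n => (hf n).aestronglyMeasurable_comp_ofReal_mul_toCircle hr _)
    (.of_forall fun x => hconv _ (ofReal_mul_toCircle_mem_ball hr x))

namespace IsRadialBoundary

variable {h hstar : ℂ → ℂ} (hrad : IsRadialBoundary h hstar)
include hrad

theorem ae_tendsto : ∀ᵐ x : 𝕋 ∂haarAddCircle,
    Tendsto (fun r : ℝ => h (r * toCircle x)) (𝓝[<] 1) (𝓝 (hstar (toCircle x))) :=
  ae_haarAddCircle_of_ae_coe (by simp only [coe_toCircle_eq_circleMap]; exact hrad)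

theorem ae_norm_le {M : ℝ} (hbd : ∀ z ∈ ball (0 : ℂ) 1, ‖h z‖ ≤ M) :
    ∀ᵐ x : 𝕋 ∂haarAddCircle, ‖hstar (toCircle x)‖ ≤ M :=
  hrad.ae_tendsto.mono fun x hx => le_of_tendsto hx.norm <|
    eventually_of_mem (Ioo_mem_nhdsLT one_pos) fun _ hr =>
      hbd _ (ofReal_mul_toCircle_mem_ball hr x)

theorem aestronglyMeasurable
    (hmeas : ∀ r ∈ Ioo (0 : ℝ) 1,
      AEStronglyMeasurable (fun x : 𝕋 => h (r * toCircle x)) haarAddCircle) :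
    AEStronglyMeasurable (fun x : 𝕋 => hstar (toCircle x)) haarAddCircle := by
  obtain ⟨ρ, -, hρ, hlim⟩ := exists_seq_strictMono_tendsto' (zero_lt_one' ℝ)
  have hρ' : Tendsto ρ atTop (𝓝[<] 1) :=
    tendsto_nhdsWithin_iff.mpr ⟨hlim, .of_forall fun n => (hρ n).2⟩
  exact aestronglyMeasurable_of_tendsto_ae atTop (fun n => hmeas _ (hρ n))
    (hrad.ae_tendsto.mono fun x hx => hx.comp hρ')

theorem tendsto_radialCoeff {M : ℝ} (hbd : ∀ z ∈ ball (0 : ℂ) 1, ‖h z‖ ≤ M)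
    (hmeas : ∀ r ∈ Ioo (0 : ℝ) 1,
      AEStronglyMeasurable (fun x : 𝕋 => h (r * toCircle x)) haarAddCircle) (k : ℤ) :
    Tendsto (radialCoeff h k) (𝓝[<] 1)
      (𝓝 (∫ x : 𝕋, hstar (toCircle x) * fourier k x ∂haarAddCircle)) := by
  have hIoo := Ioo_mem_nhdsLT (zero_lt_one' ℝ)
  refine tendsto_integral_filter_of_dominated_convergence (fun _ => M)
    (eventually_of_mem hIoo fun r hr =>
      (hmeas r hr).mul (fourier k).continuous.aestronglyMeasurable)
    (eventually_of_mem hIoo fun r hr => .of_forall fun x => ?_) (integrable_const M)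
    (hrad.ae_tendsto.mono fun x hx => hx.mul_const _)
  simpa [Circle.norm_coe] using hbd _ (ofReal_mul_toCircle_mem_ball hr x)

theorem integral_mul_fourier_eq {M : ℝ} (hbd : ∀ z ∈ ball (0 : ℂ) 1, ‖h z‖ ≤ M)
    (hmeas : ∀ r ∈ Ioo (0 : ℝ) 1,
      AEStronglyMeasurable (fun x : 𝕋 => h (r * toCircle x)) haarAddCircle)
    {k : ℤ} {c : ℂ} (hc : ∀ r ∈ Ioo (0 : ℝ) 1, (r : ℂ) ^ k * radialCoeff h k r = c) :
    ∫ x : 𝕋, hstar (toCircle x) * fourier k x ∂haarAddCircle = c := by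
  refine tendsto_nhds_unique (hrad.tendsto_radialCoeff hbd hmeas k) ?_
  have hlim : Tendsto (fun r : ℝ => (r : ℂ) ^ (-k) * c) (𝓝[<] 1) (𝓝 c) := by
    have : ContinuousAt (fun r : ℝ => (r : ℂ) ^ (-k) * c) 1 := by fun_prop (disch := simp)
    simpa using this.tendsto.mono_left nhdsWithin_le_nhds
  refine hlim.congr' (eventually_of_mem (Ioo_mem_nhdsLT one_pos) fun r hr => ?_)
  rw [← hc r hr, ← mul_assoc, ← zpow_add₀ (by exact_mod_cast hr.1.ne'), neg_add_cancel,
    zpow_zero, one_mul]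

theorem memLp_top {M : ℝ} (hbd : ∀ z ∈ ball (0 : ℂ) 1, ‖h z‖ ≤ M)
    (hmeas : ∀ r ∈ Ioo (0 : ℝ) 1,
      AEStronglyMeasurable (fun x : 𝕋 => h (r * toCircle x)) haarAddCircle) :
    MemLp (fun x : 𝕋 => hstar (toCircle x)) ∞ haarAddCircle :=
  memLp_top_of_bound (hrad.aestronglyMeasurable hmeas) M (hrad.ae_norm_le hbd)

end IsRadialBoundary

theorem tendsto_integral_boundary_mul_fourier {M : ℝ} {f : ℕ → ℂ → ℂ} {g : ℂ → ℂ}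
    (hf : ∀ n, DifferentiableOn ℂ (f n) (ball (0 : ℂ) 1))
    (hbd : ∀ n, ∀ z ∈ ball (0 : ℂ) 1, ‖f n z‖ ≤ M)
    (hconv : ∀ z ∈ ball (0 : ℂ) 1, Tendsto (fun n => f n z) atTop (𝓝 (g z)))
    {fstar : ℕ → ℂ → ℂ} {gstar : ℂ → ℂ} (hfstar : ∀ n, IsRadialBoundary (f n) (fstar n))
    (hgstar : IsRadialBoundary g gstar) (k : ℤ) :
    Tendsto (fun n => ∫ x : 𝕋, fstar n (toCircle x) * fourier k x ∂haarAddCircle) atTop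
      (𝓝 (∫ x : 𝕋, gstar (toCircle x) * fourier k x ∂haarAddCircle)) := by
  have hhalf : (1 / 2 : ℝ) ∈ Ioo 0 1 := by norm_num
  have hcont : ∀ n, ContinuousOn (f n) (ball 0 1) := fun n => (hf n).continuousOn
  have hA : ∀ r ∈ Ioo (0 : ℝ) 1,
      Tendsto (fun n => radialCoeff (f n) k r) atTop (𝓝 (radialCoeff g k r)) :=
    fun r hr => tendsto_radialCoeff_of_tendsto hcont hbd hconv k hr
  have hf_scale : ∀ n, ∀ r ∈ Ioo (0 : ℝ) 1,
      (r : ℂ) ^ k * radialCoeff (f n) k r = ((1 / 2 : ℝ) : ℂ) ^ k * radialCoeff (f n) k (1 / 2) :=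
    fun n r hr => zpow_mul_radialCoeff_eq (hf n) k hr hhalf
  have hg_scale : ∀ r ∈ Ioo (0 : ℝ) 1,
      (r : ℂ) ^ k * radialCoeff g k r = ((1 / 2 : ℝ) : ℂ) ^ k * radialCoeff g k (1 / 2) :=
    fun r hr => tendsto_nhds_unique ((hA r hr).const_mul _)
      (by simpa only [hf_scale _ r hr] using (hA _ hhalf).const_mul _)
  have hgbd : ∀ z ∈ ball (0 : ℂ) 1, ‖g z‖ ≤ M := fun z hz =>
    le_of_tendsto' (hconv z hz).norm fun n => hbd n z hz
  rw [hgstar.integral_mul_fourier_eq hgbd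
    (fun r hr => aestronglyMeasurable_comp_ofReal_mul_toCircle_of_tendsto hcont hconv hr) hg_scale]
  simp only [fun n => (hfstar n).integral_mul_fourier_eq (hbd n)
    (fun r hr => (hcont n).aestronglyMeasurable_comp_ofReal_mul_toCircle hr _) (hf_scale n)]
  exact (hA _ hhalf).const_mul _

/-- Khavinson's theorem. -/
theorem stmt2 (M : ℝ) (f : ℕ → ℂ → ℂ) (g : ℂ → ℂ)
    (hf : ∀ n, DifferentiableOn ℂ (f n) (ball (0 : ℂ) 1))
    (hbd : ∀ n, ∀ z ∈ ball (0 : ℂ) 1, ‖f n z‖ ≤ M)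
    (hconv : ∀ z ∈ ball (0 : ℂ) 1, Tendsto (fun n => f n z) atTop (𝓝 (g z)))
    (fstar : ℕ → ℂ → ℂ) (gstar : ℂ → ℂ)
    (hfstar : ∀ n, IsRadialBoundary (f n) (fstar n))
    (hgstar : IsRadialBoundary g gstar) :
    WeakStarTo fstar gstar := by
  intro Q hQ
  have hcont : ∀ n, ContinuousOn (f n) (ball 0 1) := fun n => (hf n).continuousOn
  have hgbd : ∀ z ∈ ball (0 : ℂ) 1, ‖g z‖ ≤ M := fun z hz =>
    le_of_tendsto' (hconv z hz).norm fun n => hbd n z hz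
  set R : 𝕋 → ℂ := fun x => toCircle x * I * Q (toCircle x)
  have hR : Integrable R haarAddCircle := by
    refine integrable_haarAddCircle_of_intervalIntegrable ?_
    simp only [R, coe_toCircle_eq_circleMap]
    exact hQ.continuousOn_mul (by fun_prop)
  have hcirc : ∀ h : ℂ → ℂ,
      (∮ z in C(0, 1), h z * Q z) = (2 * π) • ∫ x : 𝕋, h (toCircle x) * R x ∂haarAddCircle := by
    intro h
    rw [circleIntegral_eq_two_pi_smul_integral_haarAddCircle]
    congr 1
    refine integral_congr_ae (.of_forall fun x => ?_)
    simp only [R, ofReal_one, one_mul, zero_add, smul_eq_mul]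
    ring
  simp only [hcirc]
  exact (tendsto_integral_mul_of_tendsto_fourier
    (fun n => (hfstar n).memLp_top (hbd n)
      fun r hr => (hcont n).aestronglyMeasurable_comp_ofReal_mul_toCircle hr _)
    (fun n => (hfstar n).ae_norm_le (hbd n))
    (hgstar.memLp_top hgbd
      fun r hr => aestronglyMeasurable_comp_ofReal_mul_toCircle_of_tendsto hcont hconv hr)
    (tendsto_integral_boundary_mul_fourier hf hbd hconv hfstar hgstar) hR).const_smul _
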